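/- Let β ≥ 0, ε ∈ [0,1), and let v : [0,1] → ℝ. Suppose there exist y̲, ȳ ∈ [0,1] with y̲ ≤ ȳ such that y ↦ v(y) − ln(1+βy) is strictly increasing on [0,y̲] and strictly decreasing on [y̲,1], and y ↦ v(y) − ln(1−εy) is strictly increasing on [0,ȳ] and strictly decreasing on [ȳ,1]. Then for every x ∈ [0,1], sup_{y∈[0,1]} ( v(y) − ln((1+βy)/(1+βx))·1_{x<y} − ln((1−εy)/(1−εx))·1_{x>y} ) equals v(y̲) − ln((1+β·y̲)/(1+βx)) if x < y̲; equals v(x) if y̲ ≤ x ≤ ȳ; and equals v(ȳ) − ln((1−ε·ȳ)/(1−εx)) if x > ȳ. -/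

import Mathlib

/-!
Writing `f y = v y - log (1 + β y)` and `g y = v y - log (1 - ε y)`, rebalancing from `x` to `y`
gains `v x + (f y - f x)` when buying (`x < y`) and `v x + (g y - g x)` when selling (`y < x`).
Below `y̲` buying pays up to the peak `y̲` of `f`, while selling cannot pay because `g` still
increases there (as `y̲ ≤ ȳ`); between `y̲` and `ȳ` neither pays; above `ȳ` the situation is the
mirror image of the first case.
-/

open Set

/-- The net value of rebalancing the wealth fraction in the stock from `x` to `y`,
accounting for proportional transaction costs. -/
noncomputable def rebalanceGain (β ε : ℝ) (v : ℝ → ℝ) (x y : ℝ) : ℝ :=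
  v y - Real.log ((1 + β * y) / (1 + β * x)) * (if x < y then 1 else 0)
      - Real.log ((1 - ε * y) / (1 - ε * x)) * (if y < x then 1 else 0)

section TradeIncrement

variable {f g : ℝ → ℝ} {l u a b x y : ℝ}

lemma isMaxOn_of_monotoneOn_of_antitoneOn (hf₁ : MonotoneOn f (Icc l a))
    (hf₂ : AntitoneOn f (Icc a u)) : IsMaxOn f (Icc l u) a := by
  intro y hy
  rcases le_total y a with hya | hay
  · exact hf₁ ⟨hy.1, hya⟩ ⟨hy.1.trans hya, le_rfl⟩ hya
  · exact hf₂ ⟨le_rfl, hay.trans hy.2⟩ ⟨hay, hy.2⟩ hay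

noncomputable def tradeIncrement (f g : ℝ → ℝ) (x y : ℝ) : ℝ :=
  if x < y then f y - f x else if y < x then g y - g x else 0

lemma tradeIncrement_of_lt (h : x < y) : tradeIncrement f g x y = f y - f x := if_pos h

@[simp]
lemma tradeIncrement_self : tradeIncrement f g x x = 0 := by
  simp [tradeIncrement]

lemma tradeIncrement_of_gt (h : y < x) : tradeIncrement f g x y = g y - g x := by
  rw [tradeIncrement, if_neg h.not_gt, if_pos h]

lemma tradeIncrement_le {m : ℝ} (hbuy : x < y → f y - f x ≤ m) (hsell : y < x → g y - g x ≤ m)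
    (hstay : 0 ≤ m) : tradeIncrement f g x y ≤ m := by
  unfold tradeIncrement
  split_ifs with hxy hyx
  exacts [hbuy hxy, hsell hyx, hstay]

lemma isMaxOn_tradeIncrement_of_lt (hf₁ : MonotoneOn f (Icc l a)) (hf₂ : AntitoneOn f (Icc a u))
    (hg : MonotoneOn g (Icc l x)) (hlx : l ≤ x) (hxa : x < a) :
    IsMaxOn (tradeIncrement f g x) (Icc l u) a := by
  intro y hy
  have hfa := isMaxOn_of_monotoneOn_of_antitoneOn hf₁ hf₂
  have hfx : f x ≤ f a := hf₁ ⟨hlx, hxa.le⟩ ⟨hlx.trans hxa.le, le_rfl⟩ hxa.le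
  rw [mem_ofPred_eq, tradeIncrement_of_lt hxa]
  refine tradeIncrement_le (fun _ => sub_le_sub_right (hfa hy) _) (fun hyx => ?_) (by linarith)
  have : g y ≤ g x := hg ⟨hy.1, hyx.le⟩ ⟨hlx, le_rfl⟩ hyx.le
  linarith

lemma isMaxOn_tradeIncrement_self (hf : AntitoneOn f (Icc x u)) (hg : MonotoneOn g (Icc l x))
    (hx : x ∈ Icc l u) : IsMaxOn (tradeIncrement f g x) (Icc l u) x := by
  intro y hy
  rw [mem_ofPred_eq, tradeIncrement_self]
  refine tradeIncrement_le (fun hxy => ?_) (fun hyx => ?_) le_rfl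
  · linarith [hf ⟨le_rfl, hx.2⟩ ⟨hxy.le, hy.2⟩ hxy.le]
  · linarith [hg ⟨hy.1, hyx.le⟩ ⟨hx.1, le_rfl⟩ hyx.le]

lemma isMaxOn_tradeIncrement_of_gt (hf : AntitoneOn f (Icc x u)) (hg₁ : MonotoneOn g (Icc l b))
    (hg₂ : AntitoneOn g (Icc b u)) (hxu : x ≤ u) (hbx : b < x) :
    IsMaxOn (tradeIncrement f g x) (Icc l u) b := by
  intro y hy
  have hgb := isMaxOn_of_monotoneOn_of_antitoneOn hg₁ hg₂
  have hgx : g x ≤ g b := hg₂ ⟨le_rfl, hbx.le.trans hxu⟩ ⟨hbx.le, hxu⟩ hbx.le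
  rw [mem_ofPred_eq, tradeIncrement_of_gt hbx]
  refine tradeIncrement_le (fun hxy => ?_) (fun _ => sub_le_sub_right (hgb hy) _) (by linarith)
  have : f y ≤ f x := hf ⟨le_rfl, hxu⟩ ⟨hxy.le, hy.2⟩ hxy.le
  linarith

end TradeIncrement

section RebalanceGain

variable {β ε x y w : ℝ} {v : ℝ → ℝ}

lemma rebalanceGain_eq_add_tradeIncrement (hβ : 0 ≤ β) (hε : ε < 1) (hx : x ∈ Icc (0:ℝ) 1)
    (hy : y ∈ Icc (0:ℝ) 1) :
    rebalanceGain β ε v x y = v x + tradeIncrement (fun y => v y - Real.log (1 + β * y))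
      (fun y => v y - Real.log (1 - ε * y)) x y := by
  have hpos : ∀ z ∈ Icc (0:ℝ) 1, 0 < 1 + β * z ∧ 0 < 1 - ε * z := fun z hz =>
    ⟨by nlinarith [hz.1], by rcases le_total 0 ε with h | h <;> nlinarith [hz.1, hz.2]⟩
  rcases lt_trichotomy x y with hxy | rfl | hyx
  · rw [rebalanceGain, tradeIncrement_of_lt hxy, if_pos hxy, if_neg hxy.not_gt,
      Real.log_div (hpos y hy).1.ne' (hpos x hx).1.ne']
    ring
  · simp [rebalanceGain]
  · rw [rebalanceGain, tradeIncrement_of_gt hyx, if_neg hyx.not_gt, if_pos hyx,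
      Real.log_div (hpos y hy).2.ne' (hpos x hx).2.ne']
    ring

lemma sSup_image_rebalanceGain_eq (hβ : 0 ≤ β) (hε : ε < 1) (hx : x ∈ Icc (0:ℝ) 1)
    (hw : w ∈ Icc (0:ℝ) 1)
    (hmax : IsMaxOn (tradeIncrement (fun y => v y - Real.log (1 + β * y))
      (fun y => v y - Real.log (1 - ε * y)) x) (Icc 0 1) w) :
    sSup (rebalanceGain β ε v x '' Icc 0 1) = rebalanceGain β ε v x w := by
  have hmax' : IsMaxOn (rebalanceGain β ε v x) (Icc 0 1) w := fun y hy => by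
    rw [mem_ofPred_eq, rebalanceGain_eq_add_tradeIncrement hβ hε hx hy,
      rebalanceGain_eq_add_tradeIncrement hβ hε hx hw]
    exact add_le_add_right (hmax hy) _
  exact (hmax'.isLUB hw).csSup_eq ⟨_, mem_image_of_mem _ hw⟩

end RebalanceGain

theorem rebalance_sup_formula (β ε : ℝ) (hβ : 0 ≤ β) (hε1 : ε < 1)
    (v : ℝ → ℝ) (yl yu : ℝ)
    (hyl : yl ∈ Icc (0:ℝ) 1) (hyu : yu ∈ Icc (0:ℝ) 1) (hle : yl ≤ yu)
    (hmono₁ : StrictMonoOn (fun y => v y - Real.log (1 + β * y)) (Icc 0 yl))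
    (hanti₁ : StrictAntiOn (fun y => v y - Real.log (1 + β * y)) (Icc yl 1))
    (hmono₂ : StrictMonoOn (fun y => v y - Real.log (1 - ε * y)) (Icc 0 yu))
    (hanti₂ : StrictAntiOn (fun y => v y - Real.log (1 - ε * y)) (Icc yu 1)) :
    ∀ x ∈ Icc (0:ℝ) 1,
      (x < yl → sSup (rebalanceGain β ε v x '' Icc 0 1)
          = v yl - Real.log ((1 + β * yl) / (1 + β * x))) ∧
      (yl ≤ x → x ≤ yu → sSup (rebalanceGain β ε v x '' Icc 0 1) = v x) ∧
      (yu < x → sSup (rebalanceGain β ε v x '' Icc 0 1)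
          = v yu - Real.log ((1 - ε * yu) / (1 - ε * x))) := by
  intro x hx
  refine ⟨fun hxl => ?_, fun hlx hxu => ?_, fun hux => ?_⟩
  · have hg := hmono₂.monotoneOn.mono (Icc_subset_Icc le_rfl (hxl.le.trans hle))
    rw [sSup_image_rebalanceGain_eq hβ hε1 hx hyl (isMaxOn_tradeIncrement_of_lt
      hmono₁.monotoneOn hanti₁.antitoneOn hg hx.1 hxl)]
    simp [rebalanceGain, hxl, hxl.not_gt]
  · have hf := hanti₁.antitoneOn.mono (Icc_subset_Icc hlx le_rfl)
    have hg := hmono₂.monotoneOn.mono (Icc_subset_Icc le_rfl hxu)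
    rw [sSup_image_rebalanceGain_eq hβ hε1 hx hx (isMaxOn_tradeIncrement_self hf hg hx)]
    simp [rebalanceGain]
  · have hf := hanti₁.antitoneOn.mono (Icc_subset_Icc (hle.trans hux.le) le_rfl)
    rw [sSup_image_rebalanceGain_eq hβ hε1 hx hyu (isMaxOn_tradeIncrement_of_gt
      hf hmono₂.monotoneOn hanti₂.antitoneOn hx.2 hux)]
    simp [rebalanceGain, hux, hux.not_gt]
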